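/- arXiv:2510.08882 — 6 statements merged into one kernel-verified Lean document; each statement's English description precedes it below -/
import Mathlib

section
/- Freedman-type inequality: Let (Ω, 𝔉, P) be a probability space with a filtration 𝔉_1 ⊆ 𝔉_2 ⊆ ⋯, and let X_1, …, X_T be real random variables such that each X_t is 𝔉_{t+1}-measurable, E[X_t | 𝔉_t] = 0, and X_t ≤ B almost surely for some constant B > 0. Then for every α ≥ B and every δ ∈ (0,1), with probability at least 1 − δ, Σ_{t=1}^T X_t ≤ (1/α) · Σ_{t=1}^T E[X_t² | 𝔉_t] + α · log(1/δ). -/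
open MeasureTheory ProbabilityTheory Finset Real

/-! With `c = 1/α` we have `c X_t ≤ 1`, and `eˣ ≤ 1 + x + x²` for `x ≤ 1`; since
`E[X_t | ℱ_t] = 0` this gives `E[e^{c X_t} | ℱ_t] ≤ 1 + c² V_t ≤ e^{c² V_t}` with
`V_t = E[X_t² | ℱ_t]`. Hence `exp (c ∑ X_t - c² ∑ V_t)` is a supermartingale started at `1`, so
its mean is at most `1`, and Markov's inequality at level `1/δ` gives the bound after
multiplying the exponent by `α`. -/

lemma Real.exp_le_one_add_add_sq {x : ℝ} (hx : x ≤ 1) : exp x ≤ 1 + x + x ^ 2 := by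
  rcases le_or_gt (-1) x with hx' | hx'
  · linarith [(abs_le.mp (abs_exp_sub_one_sub_id_le (abs_le.mpr ⟨hx', hx⟩))).2]
  · nlinarith [exp_le_one_iff.mpr (by linarith : x ≤ 0)]

lemma integrable_exp_of_ae_le {α : Type*} {m : MeasurableSpace α} {μ : Measure α}
    [IsFiniteMeasure μ] {f : α → ℝ} {C : ℝ} (hf : AEStronglyMeasurable f μ)
    (hfC : ∀ᵐ x ∂μ, f x ≤ C) : Integrable (fun x => exp (f x)) μ :=
  Integrable.of_bound (continuous_exp.comp_aestronglyMeasurable hf) (exp C) <| by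
    filter_upwards [hfC] with x hx
    rw [norm_of_nonneg (exp_pos _).le]
    exact exp_le_exp.mpr hx

lemma one_sub_le_measureReal_lt_inv_of_integral_le_one {α : Type*} {m : MeasurableSpace α}
    {μ : Measure α} [IsProbabilityMeasure μ] {Z : α → ℝ} (hZ0 : 0 ≤ᵐ[μ] Z)
    (hZ : Integrable Z μ) (hZ1 : ∫ x, Z x ∂μ ≤ 1) {δ : ℝ} (hδ : 0 < δ) :
    1 - δ ≤ μ.real {x | Z x < 1 / δ} := by
  have hmarkov := (mul_meas_ge_le_integral_of_nonneg hZ0 hZ (1 / δ)).trans hZ1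
  have htail : μ.real {x | 1 / δ ≤ Z x} ≤ δ := by
    rwa [one_div, inv_mul_le_iff₀ hδ, mul_one, ← one_div] at hmarkov
  have hcover : μ.real Set.univ ≤ μ.real {x | Z x < 1 / δ} + μ.real {x | 1 / δ ≤ Z x} :=
    (measureReal_mono fun x _ => lt_or_ge (Z x) (1 / δ)).trans
      (measureReal_union_le _ _)
  rw [probReal_univ] at hcover
  linarith

section

variable {Ω : Type*} {m0 : MeasurableSpace Ω} {P : Measure Ω}

lemma condExp_exp_mul_le [IsFiniteMeasure P] {m : MeasurableSpace Ω} {Y : Ω → ℝ} {c : ℝ}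
    (hm : m ≤ m0) (hY : Integrable Y P) (hY2 : Integrable (fun ω => Y ω ^ 2) P)
    (hY0 : P[Y | m] =ᵐ[P] 0) (hcY : ∀ᵐ ω ∂P, c * Y ω ≤ 1) :
    P[fun ω => exp (c * Y ω) | m] ≤ᵐ[P] fun ω => exp (c ^ 2 * P[fun ω => Y ω ^ 2 | m] ω) := by
  have hquad : Integrable ((fun _ => (1 : ℝ)) + c • Y + c ^ 2 • fun ω => Y ω ^ 2) P :=
    ((integrable_const 1).add (hY.smul c)).add (hY2.smul _)
  have hmono := condExp_mono (m := m) (integrable_exp_of_ae_le (hY.const_mul c).1 hcY) hquad <| by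
    filter_upwards [hcY] with ω hω
    simpa [mul_pow] using exp_le_one_add_add_sq hω
  have hlin : P[(fun _ => (1 : ℝ)) + c • Y + c ^ 2 • fun ω => Y ω ^ 2 | m]
      =ᵐ[P] fun ω => 1 + c ^ 2 * P[fun ω => Y ω ^ 2 | m] ω := by
    filter_upwards [condExp_add ((integrable_const 1).add (hY.smul c)) (hY2.smul (c ^ 2)) m,
      condExp_add (integrable_const 1) (hY.smul c) m, condExp_smul c Y m,
      condExp_smul (c ^ 2) (fun ω => Y ω ^ 2) m, hY0] with ω h1 h2 h3 h4 h5
    simp only [h1, Pi.add_apply, h2, h3, h4, Pi.smul_apply, smul_eq_mul, h5, condExp_const hm,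
      Pi.zero_apply, mul_zero, add_zero]
  filter_upwards [hmono, hlin] with ω hmono hlin
  rw [hlin] at hmono
  linarith [add_one_le_exp (c ^ 2 * P[fun ω => Y ω ^ 2 | m] ω)]

noncomputable def freedmanProcess (P : Measure Ω) (ℱ : Filtration ℕ m0) (X : ℕ → Ω → ℝ) (c : ℝ)
    (n : ℕ) (ω : Ω) : ℝ :=
  exp (c * ∑ t ∈ Icc 1 n, X t ω - c ^ 2 * ∑ t ∈ Icc 1 n, P[fun ω' => X t ω' ^ 2 | ℱ t] ω)

variable {ℱ : Filtration ℕ m0} {X : ℕ → Ω → ℝ} {c : ℝ}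

lemma freedmanProcess_zero : freedmanProcess P ℱ X c 0 = 1 := by
  ext
  simp [freedmanProcess]

-- Only the last factor is not `ℱ (n + 1)`-measurable.
lemma freedmanProcess_succ (n : ℕ) :
    freedmanProcess P ℱ X c (n + 1) =
      (freedmanProcess P ℱ X c n *
        fun ω => exp (-(c ^ 2 * P[fun ω' => X (n + 1) ω' ^ 2 | ℱ (n + 1)] ω))) *
      fun ω => exp (c * X (n + 1) ω) := by
  ext ω
  simp only [freedmanProcess, Pi.mul_apply, ← exp_add, sum_Icc_succ_top (Nat.le_add_left 1 n)]
  ring_nf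

lemma stronglyMeasurable_freedmanProcess {n : ℕ}
    (hmeas : ∀ t ∈ Icc 1 n, StronglyMeasurable[ℱ (t + 1)] (X t)) :
    StronglyMeasurable[ℱ (n + 1)] (freedmanProcess P ℱ X c n) := by
  refine continuous_exp.comp_stronglyMeasurable <|
    .sub (.const_mul (stronglyMeasurable_fun_sum _ fun t ht => ?_) _)
      (.const_mul (stronglyMeasurable_fun_sum _ fun t ht => ?_) _)
  · exact (hmeas t ht).mono (ℱ.mono (by simp only [mem_Icc] at ht; omega))
  · exact stronglyMeasurable_condExp.mono (ℱ.mono (by simp only [mem_Icc] at ht; omega))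

lemma integrable_freedmanProcess [IsFiniteMeasure P] {n : ℕ}
    (hmeas : ∀ t ∈ Icc 1 n, StronglyMeasurable[ℱ (t + 1)] (X t))
    (hbdd : ∀ t ∈ Icc 1 n, ∀ᵐ ω ∂P, c * X t ω ≤ 1) :
    Integrable (freedmanProcess P ℱ X c n) P := by
  have hS : ∀ᵐ ω ∂P, c * ∑ t ∈ Icc 1 n, X t ω ≤ #(Icc 1 n) := by
    filter_upwards [(Filter.eventually_all_finset _).2 hbdd] with ω hω
    simpa [mul_sum] using sum_le_sum hω
  have hV : ∀ᵐ ω ∂P, 0 ≤ ∑ t ∈ Icc 1 n, P[fun ω' => X t ω' ^ 2 | ℱ t] ω := by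
    filter_upwards [(Filter.eventually_all_finset _).2 fun t _ =>
      condExp_nonneg (m := ℱ t) (f := fun ω => X t ω ^ 2)
        (ae_of_all P fun ω => sq_nonneg (X t ω))] with ω hω
    exact sum_nonneg hω
  refine .of_bound
    ((stronglyMeasurable_freedmanProcess hmeas).mono (ℱ.le _)).aestronglyMeasurable
    (exp #(Icc 1 n)) ?_
  filter_upwards [hS, hV] with ω hS hV
  rw [freedmanProcess, norm_of_nonneg (exp_pos _).le, exp_le_exp]
  nlinarith [mul_nonneg (sq_nonneg c) hV]

lemma condExp_freedmanProcess_succ_le [IsFiniteMeasure P] {n : ℕ}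
    (hmeas : ∀ t ∈ Icc 1 (n + 1), StronglyMeasurable[ℱ (t + 1)] (X t))
    (hbdd : ∀ t ∈ Icc 1 (n + 1), ∀ᵐ ω ∂P, c * X t ω ≤ 1)
    (hint : Integrable (X (n + 1)) P) (hint2 : Integrable (fun ω => X (n + 1) ω ^ 2) P)
    (hcond : P[X (n + 1) | ℱ (n + 1)] =ᵐ[P] 0) :
    P[freedmanProcess P ℱ X c (n + 1) | ℱ (n + 1)] ≤ᵐ[P] freedmanProcess P ℱ X c n := by
  have hlast : n + 1 ∈ Icc 1 (n + 1) := by simp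
  have hpred : StronglyMeasurable[ℱ (n + 1)] (freedmanProcess P ℱ X c n *
      fun ω => exp (-(c ^ 2 * P[fun ω' => X (n + 1) ω' ^ 2 | ℱ (n + 1)] ω))) :=
    (stronglyMeasurable_freedmanProcess
      fun t ht => hmeas t (Icc_subset_Icc_right n.le_succ ht)).mul
      (continuous_exp.comp_stronglyMeasurable (stronglyMeasurable_condExp.const_mul _).neg)
  have hpull := condExp_mul_of_stronglyMeasurable_left hpred
    (freedmanProcess_succ (P := P) n ▸ integrable_freedmanProcess hmeas hbdd)
    (integrable_exp_of_ae_le (hint.const_mul c).1 (hbdd _ hlast))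
  rw [freedmanProcess_succ]
  filter_upwards [hpull, condExp_exp_mul_le (ℱ.le _) hint hint2 hcond (hbdd _ hlast)]
    with ω hpull hexp
  rw [hpull, Pi.mul_apply, Pi.mul_apply]
  calc _ ≤ freedmanProcess P ℱ X c n ω *
        exp (-(c ^ 2 * P[fun ω' => X (n + 1) ω' ^ 2 | ℱ (n + 1)] ω)) *
        exp (c ^ 2 * P[fun ω' => X (n + 1) ω' ^ 2 | ℱ (n + 1)] ω) :=
      mul_le_mul_of_nonneg_left hexp (mul_pos (exp_pos _) (exp_pos _)).le
    _ = freedmanProcess P ℱ X c n ω := by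
      rw [mul_assoc, ← exp_add, neg_add_cancel, exp_zero, mul_one]

lemma integral_freedmanProcess_le_one [IsProbabilityMeasure P] {n : ℕ}
    (hmeas : ∀ t ∈ Icc 1 n, StronglyMeasurable[ℱ (t + 1)] (X t))
    (hint : ∀ t ∈ Icc 1 n, Integrable (X t) P)
    (hint2 : ∀ t ∈ Icc 1 n, Integrable (fun ω => X t ω ^ 2) P)
    (hcond : ∀ t ∈ Icc 1 n, P[X t | ℱ t] =ᵐ[P] 0)
    (hbdd : ∀ t ∈ Icc 1 n, ∀ᵐ ω ∂P, c * X t ω ≤ 1) :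
    ∫ ω, freedmanProcess P ℱ X c n ω ∂P ≤ 1 := by
  induction n with
  | zero => simp [freedmanProcess_zero]
  | succ n ih =>
    have hlast : n + 1 ∈ Icc 1 (n + 1) := by simp
    have restrict {p : ℕ → Prop} (h : ∀ t ∈ Icc 1 (n + 1), p t) : ∀ t ∈ Icc 1 n, p t :=
      fun t ht => h t (Icc_subset_Icc_right n.le_succ ht)
    calc ∫ ω, freedmanProcess P ℱ X c (n + 1) ω ∂P
        = ∫ ω, P[freedmanProcess P ℱ X c (n + 1) | ℱ (n + 1)] ω ∂P :=
          (integral_condExp (ℱ.le _)).symm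
      _ ≤ ∫ ω, freedmanProcess P ℱ X c n ω ∂P :=
          integral_mono_ae integrable_condExp
            (integrable_freedmanProcess (restrict hmeas) (restrict hbdd))
            (condExp_freedmanProcess_succ_le hmeas hbdd (hint _ hlast) (hint2 _ hlast)
              (hcond _ hlast))
      _ ≤ 1 :=
          ih (restrict hmeas) (restrict hint) (restrict hint2) (restrict hcond) (restrict hbdd)

end

theorem freedman_inequality_general
    {Ω : Type*} {m0 : MeasurableSpace Ω} (P : Measure Ω) [IsProbabilityMeasure P]
    (ℱ : Filtration ℕ m0) (T : ℕ) (X : ℕ → Ω → ℝ) (B : ℝ) (hB : 0 < B)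
    (hmeas : ∀ t ∈ Icc 1 T, StronglyMeasurable[ℱ (t + 1)] (X t))
    (hint : ∀ t ∈ Icc 1 T, Integrable (X t) P)
    (hint2 : ∀ t ∈ Icc 1 T, Integrable (fun ω => (X t ω) ^ 2) P)
    (hcond : ∀ t ∈ Icc 1 T, P[X t | ℱ t] =ᵐ[P] 0)
    (hbdd : ∀ t ∈ Icc 1 T, ∀ᵐ ω ∂P, X t ω ≤ B)
    (α : ℝ) (hα : B ≤ α) (δ : ℝ) (hδ0 : 0 < δ) :
    (1 : ℝ) - δ ≤
      (P {ω | ∑ t ∈ Icc 1 T, X t ω ≤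
          (1 / α) * ∑ t ∈ Icc 1 T, (P[fun ω' => (X t ω') ^ 2 | ℱ t]) ω
            + α * Real.log (1 / δ)}).toReal := by
  have hα0 : 0 < α := hB.trans_le hα
  have hscaled : ∀ t ∈ Icc 1 T, ∀ᵐ ω ∂P, 1 / α * X t ω ≤ 1 := fun t ht => by
    filter_upwards [hbdd t ht] with ω hω
    rw [one_div_mul_eq_div, div_le_one hα0]
    linarith
  refine (one_sub_le_measureReal_lt_inv_of_integral_le_one
    (ae_of_all P fun ω => (exp_pos _).le) (integrable_freedmanProcess hmeas hscaled)
    (integral_freedmanProcess_le_one hmeas hint hint2 hcond hscaled) hδ0).trans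
    (measureReal_mono fun ω hω => ?_)
  replace hω := (lt_log_iff_exp_lt (one_div_pos.2 hδ0)).2 hω
  have hrescale (S V : ℝ) : S - 1 / α * V = α * (1 / α * S - (1 / α) ^ 2 * V) := by
    field_simp
  show (_ : ℝ) ≤ _
  linarith [mul_lt_mul_of_pos_left hω hα0, hrescale (∑ t ∈ Icc 1 T, X t ω)
    (∑ t ∈ Icc 1 T, P[fun ω' => X t ω' ^ 2 | ℱ t] ω)]

/-- Freedman-type inequality: let `(Ω, 𝔉, P)` be a probability space with a filtration
`ℱ`, and `X_1, …, X_T` real random variables with `X_t` being `ℱ_{t+1}`-measurable,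
`E[X_t | ℱ_t] = 0`, and `X_t ≤ B` almost surely, for a constant `B > 0`. Then for every
`α ≥ B` and `δ ∈ (0,1)`, with probability at least `1 − δ`,
`Σ_{t=1}^T X_t ≤ (1/α) Σ_{t=1}^T E[X_t² | ℱ_t] + α log(1/δ)`. -/
theorem freedman_inequality
    {Ω : Type*} {m0 : MeasurableSpace Ω} (P : Measure Ω) [IsProbabilityMeasure P]
    (ℱ : Filtration ℕ m0) (T : ℕ) (X : ℕ → Ω → ℝ) (B : ℝ) (hB : 0 < B)
    (hmeas : ∀ t ∈ Icc 1 T, StronglyMeasurable[ℱ (t + 1)] (X t))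
    (hint : ∀ t ∈ Icc 1 T, Integrable (X t) P)
    (hint2 : ∀ t ∈ Icc 1 T, Integrable (fun ω => (X t ω) ^ 2) P)
    (hcond : ∀ t ∈ Icc 1 T, P[X t | ℱ t] =ᵐ[P] 0)
    (hbdd : ∀ t ∈ Icc 1 T, ∀ᵐ ω ∂P, X t ω ≤ B)
    (α : ℝ) (hα : B ≤ α) (δ : ℝ) (hδ0 : 0 < δ) (hδ1 : δ < 1) :
    (1 : ℝ) - δ ≤
      (P {ω | ∑ t ∈ Icc 1 T, X t ω ≤
          (1 / α) * ∑ t ∈ Icc 1 T, (P[fun ω' => (X t ω') ^ 2 | ℱ t]) ω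
            + α * Real.log (1 / δ)}).toReal :=
  freedman_inequality_general P ℱ T X B hB hmeas hint hint2 hcond hbdd α hα δ hδ0
end

section
/- Mirror descent with auxiliary terms: Let N ≥ 1, T ≥ 1, γ > 0, and for each t ∈ {1,…,T} let F_t : Δ_N → ℝ be a convex function that is differentiable on a neighborhood of Δ_N, and let ℓ_t, b_t ∈ ℝ^N satisfy γ·|ℓ_t(i)| ≤ 1/16 and 0 ≤ γ·b_t(i) ≤ 1/4 for all i ∈ {1,…,N}. Let p_1 = (1/N, …, 1/N) and for each t let p_{t+1} ∈ Δ_N be a minimizer over p ∈ Δ_N of ⟨p, ℓ_t + 4γ·ℓ_t² + b_t⟩ + F_t(p) + (1/γ)·KL(p, p_t), where ℓ_t² denotes the coordinatewise square; assume each p_{t+1} has full support. Then for every p* ∈ Δ_N: Σ_{t=1}^T ⟨p_t, ℓ_t⟩ ≤ (log N)/γ + Σ_{t=1}^T ( ⟨p*, ℓ_t + 4γ·ℓ_t²⟩ + ⟨p*, b_t⟩ − (1/2)·⟨p_t, b_t⟩ + F_t(p*) − F_t(p_{t+1}) − Breg_{F_t}(p*, p_{t+1}) ). -/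
/-!
Each step is the first-order optimality condition of the KL-regularized objective at the
interior minimizer `p_{t+1}`. The three-point identity turns its entropic part into
`KL(p*, p_t) - KL(p*, p_{t+1}) - KL(p_{t+1}, p_t)`, and `KL(p_{t+1}, p_t)` pays for replacing
the loss of `p_t` by the penalized loss of `p_{t+1}`: by duality
`y log (y/x) ≥ y - x e^{-s} - s y`, and `e^{-(A + 4A² + B)} ≤ 1 - A - B/2` for small `A, B`.
Summed over `t`, the KL terms telescope to at most `KL(p*, uniform) ≤ log N`.
-/

open Finset Real

section

variable {ι : Type*} [Fintype ι]

noncomputable def relEntropy (q x : ι → ℝ) : ℝ :=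
  ∑ i, q i * log (q i / x i)

noncomputable def mirrorObjective (c : ι → ℝ) (F : (ι → ℝ) → ℝ)
    (γ : ℝ) (x q : ι → ℝ) : ℝ :=
  ∑ i, q i * c i + F q + 1 / γ * relEntropy q x

lemma sub_mul_exp_neg_le_mul_log_div {x y : ℝ} (hx : 0 < x) (hy : 0 ≤ y) (s : ℝ) :
    y - x * exp (-s) ≤ y * log (y / x) + s * y := by
  rcases hy.eq_or_lt with rfl | hy
  · simp only [zero_sub, zero_div, log_zero, mul_zero, add_zero, neg_nonpos]
    positivity
  · have h := one_sub_inv_le_log_of_pos (show 0 < y / (x * exp (-s)) by positivity)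
    rw [inv_div, log_div hy.ne' (by positivity), log_mul hx.ne' (exp_pos _).ne', log_exp] at h
    calc y - x * exp (-s) = y * (1 - x * exp (-s) / y) := by field_simp
      _ ≤ y * (log y - (log x + -s)) := mul_le_mul_of_nonneg_left h hy.le
      _ = y * log (y / x) + s * y := by rw [log_div hy.ne' hx.ne']; ring

lemma exp_neg_le_one_sub {A B : ℝ} (hA : |A| ≤ 1 / 16) (hB0 : 0 ≤ B) (hB1 : B ≤ 1 / 4) :
    exp (-(A + 4 * A ^ 2 + B)) ≤ 1 - A - B / 2 := by
  obtain ⟨hA1, hA2⟩ := abs_le.mp hA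
  have hloss : exp (-(A + 4 * A ^ 2)) ≤ 1 - A := by
    rw [exp_neg, inv_le_iff_one_le_mul₀ (exp_pos _)]
    -- `(1 - A) (1 + A + 4A²) = 1 + 3A² - 4A³ ≥ 1`
    nlinarith [add_one_le_exp (A + 4 * A ^ 2)]
  have hbonus : exp (-B) ≤ (1 + B)⁻¹ := by
    rw [exp_neg]
    exact inv_anti₀ (by linarith) (by linarith [add_one_le_exp B])
  calc exp (-(A + 4 * A ^ 2 + B)) = exp (-(A + 4 * A ^ 2)) * exp (-B) := by
        rw [← exp_add]; ring_nf
    _ ≤ (1 - A) * (1 + B)⁻¹ := mul_le_mul hloss hbonus (exp_pos _).le (by linarith)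
    _ ≤ 1 - A - B / 2 := by
        rw [mul_inv_le_iff₀ (by linarith)]
        nlinarith

lemma hasDerivAt_mul_log_div {x y : ℝ} (hx : x ≠ 0) (hy : y ≠ 0) :
    HasDerivAt (fun w => w * log (w / x)) (log (y / x) + 1) y := by
  refine ((hasDerivAt_id' y).mul
    (((hasDerivAt_id' y).div_const x).log (div_ne_zero hy hx))).congr_deriv ?_
  field_simp

lemma relEntropy_nonneg {q x : ι → ℝ} (hq : ∀ i, 0 ≤ q i) (hx : ∀ i, 0 < x i)
    (hqx : ∑ i, q i = ∑ i, x i) : 0 ≤ relEntropy q x := by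
  have h := sum_le_sum fun i (_ : i ∈ univ) =>
    show q i - x i ≤ q i * log (q i / x i) by
      simpa using sub_mul_exp_neg_le_mul_log_div (hx i) (hq i) 0
  rwa [sum_sub_distrib, hqx, sub_self] at h

lemma relEntropy_uniform_le_log {q : ι → ℝ} (hq : q ∈ stdSimplex ℝ ι) :
    relEntropy q (fun _ => 1 / Fintype.card ι) ≤ log (Fintype.card ι) := by
  have term : ∀ i, q i * log (q i / (1 / Fintype.card ι)) ≤ q i * log (Fintype.card ι) := by
    intro i
    rcases (hq.1 i).eq_or_lt with h | h
    · simp [← h]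
    · have hcard : (0 : ℝ) < Fintype.card ι := by exact_mod_cast Fintype.card_pos_iff.mpr ⟨i⟩
      have hq1 : q i ≤ 1 := hq.2 ▸ single_le_sum (fun j _ => hq.1 j) (mem_univ i)
      rw [div_div_eq_mul_div, div_one, log_mul h.ne' hcard.ne', mul_add]
      linarith [mul_log_nonpos h.le hq1]
  calc relEntropy q (fun _ => 1 / Fintype.card ι) ≤ ∑ i, q i * log (Fintype.card ι) :=
        sum_le_sum fun i _ => term i
    _ = log (Fintype.card ι) := by rw [← sum_mul, hq.2, one_mul]

lemma relEntropy_three_point {q x y : ι → ℝ} (hq : ∀ i, 0 ≤ q i) (hx : ∀ i, 0 < x i)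
    (hy : ∀ i, 0 < y i) (hqy : ∑ i, q i = ∑ i, y i) :
    ∑ i, (q i - y i) * (log (y i / x i) + 1)
      = relEntropy q x - relEntropy q y - relEntropy y x := by
  have term : ∀ i, (q i - y i) * (log (y i / x i) + 1)
      = q i * log (q i / x i) - q i * log (q i / y i) - y i * log (y i / x i)
        + (q i - y i) := by
    intro i
    rcases (hq i).eq_or_lt with h | h
    · rw [← h]; ring
    · rw [log_div (hy i).ne' (hx i).ne', log_div h.ne' (hx i).ne', log_div h.ne' (hy i).ne']
      ring
  simp only [term, relEntropy, sum_add_distrib, sum_sub_distrib, hqy, sub_self, add_zero]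

lemma mul_sum_sub_le_relEntropy {x y ℓ b : ι → ℝ} {γ : ℝ} (hγ : 0 ≤ γ)
    (hx : ∀ i, 0 < x i) (hy : ∀ i, 0 ≤ y i) (hxy : ∑ i, x i = ∑ i, y i)
    (hℓ : ∀ i, γ * |ℓ i| ≤ 1 / 16) (hb0 : ∀ i, 0 ≤ γ * b i) (hb1 : ∀ i, γ * b i ≤ 1 / 4) :
    γ * (∑ i, x i * ℓ i + 1 / 2 * ∑ i, x i * b i
        - ∑ i, y i * (ℓ i + 4 * γ * ℓ i ^ 2 + b i))
      ≤ relEntropy y x := by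
  have term : ∀ i, γ * (x i * ℓ i + 1 / 2 * (x i * b i) - y i * (ℓ i + 4 * γ * ℓ i ^ 2 + b i))
      ≤ y i * log (y i / x i) - y i + x i := by
    intro i
    have hA : |γ * ℓ i| ≤ 1 / 16 := by rw [abs_mul, abs_of_nonneg hγ]; exact hℓ i
    have hexp := mul_le_mul_of_nonneg_left (exp_neg_le_one_sub hA (hb0 i) (hb1 i)) (hx i).le
    linear_combination sub_mul_exp_neg_le_mul_log_div (hx i) (hy i)
      (γ * ℓ i + 4 * (γ * ℓ i) ^ 2 + γ * b i) + hexp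
  calc _ = ∑ i, γ * (x i * ℓ i + 1 / 2 * (x i * b i)
          - y i * (ℓ i + 4 * γ * ℓ i ^ 2 + b i)) := by
        rw [← mul_sum, sum_sub_distrib, sum_add_distrib, mul_sum]
    _ ≤ ∑ i, (y i * log (y i / x i) - y i + x i) := sum_le_sum fun i _ => term i
    _ = relEntropy y x := by rw [sum_add_distrib, sum_sub_distrib, hxy, relEntropy]; ring

lemma hasFDerivAt_relEntropy {x y : ι → ℝ} (hx : ∀ i, x i ≠ 0) (hy : ∀ i, y i ≠ 0) :
    HasFDerivAt (fun q => relEntropy q x)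
      (∑ i, (log (y i / x i) + 1) • ContinuousLinearMap.proj i : (ι → ℝ) →L[ℝ] ℝ) y :=
  HasFDerivAt.fun_sum fun i _ =>
    ((hasDerivAt_mul_log_div (hx i) (hy i)).comp_hasFDerivAt y
      (hasFDerivAt_apply (𝕜 := ℝ) (F' := fun _ : ι => ℝ) i y) :)

lemma mirrorObjective_fderiv_nonneg {c x y q : ι → ℝ} {F : (ι → ℝ) → ℝ} {γ : ℝ}
    {S : Set (ι → ℝ)} (hS : Convex ℝ S) (hyS : y ∈ S) (hqS : q ∈ S)
    (hmin : IsMinOn (mirrorObjective c F γ x) S y) (hF : DifferentiableAt ℝ F y)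
    (hx : ∀ i, x i ≠ 0) (hy : ∀ i, y i ≠ 0) :
    0 ≤ ∑ i, (q i - y i) * c i + fderiv ℝ F y (q - y)
      + 1 / γ * ∑ i, (q i - y i) * (log (y i / x i) + 1) := by
  have hlin : HasFDerivAt (fun q : ι → ℝ => ∑ i, q i * c i)
      (∑ i, c i • ContinuousLinearMap.proj i : (ι → ℝ) →L[ℝ] ℝ) y :=
    HasFDerivAt.fun_sum fun i _ => (hasFDerivAt_apply i y).mul_const (c i)
  have hderiv := (hlin.add hF.hasFDerivAt).add ((hasFDerivAt_relEntropy hx hy).const_mul (1 / γ))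
  have := hmin.localize.hasFDerivWithinAt_nonneg hderiv.hasFDerivWithinAt
    (sub_mem_posTangentConeAt_of_segment_subset (hS.segment_subset hyS hqS))
  simpa [mul_comm] using this

theorem loss_le_of_isMinOn_mirrorObjective {x y q ℓ b : ι → ℝ} {F : (ι → ℝ) → ℝ} {γ : ℝ}
    (hγ : 0 < γ) (hx : x ∈ stdSimplex ℝ ι) (hxpos : ∀ i, 0 < x i)
    (hy : y ∈ stdSimplex ℝ ι) (hypos : ∀ i, 0 < y i) (hq : q ∈ stdSimplex ℝ ι)
    (hℓ : ∀ i, γ * |ℓ i| ≤ 1 / 16) (hb0 : ∀ i, 0 ≤ γ * b i) (hb1 : ∀ i, γ * b i ≤ 1 / 4)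
    (hF : DifferentiableAt ℝ F y)
    (hmin : IsMinOn (mirrorObjective (fun i => ℓ i + 4 * γ * ℓ i ^ 2 + b i) F γ x)
      (stdSimplex ℝ ι) y) :
    ∑ i, x i * ℓ i
      ≤ ∑ i, q i * (ℓ i + 4 * γ * ℓ i ^ 2) + ∑ i, q i * b i - 1 / 2 * ∑ i, x i * b i
        + fderiv ℝ F y (q - y) + (relEntropy q x - relEntropy q y) / γ := by
  have hopt := mirrorObjective_fderiv_nonneg (convex_stdSimplex ℝ ι) hy hq hmin hF
    (fun i => (hxpos i).ne') (fun i => (hypos i).ne')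
  rw [relEntropy_three_point hq.1 hxpos hypos (by rw [hq.2, hy.2])] at hopt
  have hstab := mul_sum_sub_le_relEntropy hγ.le hxpos hy.1 (by rw [hx.2, hy.2]) hℓ hb0 hb1
  have hcost : ∑ i, (q i - y i) * (ℓ i + 4 * γ * ℓ i ^ 2 + b i)
      = ∑ i, q i * (ℓ i + 4 * γ * ℓ i ^ 2) + ∑ i, q i * b i
        - ∑ i, y i * (ℓ i + 4 * γ * ℓ i ^ 2 + b i) := by
    rw [← sum_add_distrib, ← sum_sub_distrib]
    exact sum_congr rfl fun i _ => by ring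
  rw [hcost] at hopt
  have hopt' := mul_nonneg hγ.le hopt
  rw [mul_add γ _ (1 / γ * _), ← mul_assoc, mul_one_div_cancel hγ.ne', one_mul] at hopt'
  rw [← sub_le_iff_le_add', le_div_iff₀ hγ]
  linear_combination hopt' + hstab

end

theorem mirror_descent_with_auxiliary_terms_general
    (N T : ℕ) (hN : 1 ≤ N) (hT : 1 ≤ T) (γ : ℝ) (hγ : 0 < γ)
    (F : ℕ → (Fin N → ℝ) → ℝ)
    (U : Set (Fin N → ℝ)) (hUopen : IsOpen U) (hUsub : stdSimplex ℝ (Fin N) ⊆ U)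
    (hFdiff : ∀ t, DifferentiableOn ℝ (F t) U)
    (ℓ b : ℕ → Fin N → ℝ)
    (hℓ : ∀ t i, γ * |ℓ t i| ≤ 1 / 16)
    (hb0 : ∀ t i, 0 ≤ γ * b t i) (hb1 : ∀ t i, γ * b t i ≤ 1 / 4)
    (p : ℕ → Fin N → ℝ)
    (hp1 : ∀ i, p 1 i = 1 / N)
    (hpmem : ∀ t, p t ∈ stdSimplex ℝ (Fin N))
    (hsupp : ∀ t, 2 ≤ t → ∀ i, 0 < p t i)
    (hmin : ∀ t, 1 ≤ t → t ≤ T → ∀ q ∈ stdSimplex ℝ (Fin N),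
      (∑ i, p (t + 1) i * (ℓ t i + 4 * γ * (ℓ t i) ^ 2 + b t i)) + F t (p (t + 1))
          + (1 / γ) * ∑ i, p (t + 1) i * Real.log (p (t + 1) i / p t i)
        ≤ (∑ i, q i * (ℓ t i + 4 * γ * (ℓ t i) ^ 2 + b t i)) + F t q
          + (1 / γ) * ∑ i, q i * Real.log (q i / p t i))
    (pstar : Fin N → ℝ) (hpstar : pstar ∈ stdSimplex ℝ (Fin N)) :
    ∑ t ∈ Icc 1 T, ∑ i, p t i * ℓ t i
      ≤ Real.log N / γ
        + ∑ t ∈ Icc 1 T,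
            ((∑ i, pstar i * (ℓ t i + 4 * γ * (ℓ t i) ^ 2))
              + (∑ i, pstar i * b t i) - (1 / 2) * ∑ i, p t i * b t i
              + F t pstar - F t (p (t + 1))
              - (F t pstar - F t (p (t + 1))
                  - fderiv ℝ (F t) (p (t + 1)) (pstar - p (t + 1)))) := by
  have hpos : ∀ t, 1 ≤ t → ∀ i, 0 < p t i := by
    intro t ht i
    rcases ht.eq_or_lt with rfl | ht
    · rw [hp1]
      exact one_div_pos.mpr (Nat.cast_pos.mpr hN)
    · exact hsupp t ht i
  have hstep : ∀ t ∈ Icc 1 T, ∑ i, p t i * ℓ t i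
      ≤ ((∑ i, pstar i * (ℓ t i + 4 * γ * (ℓ t i) ^ 2))
          + (∑ i, pstar i * b t i) - (1 / 2) * ∑ i, p t i * b t i
          + F t pstar - F t (p (t + 1))
          - (F t pstar - F t (p (t + 1))
              - fderiv ℝ (F t) (p (t + 1)) (pstar - p (t + 1))))
        + (relEntropy pstar (p t) - relEntropy pstar (p (t + 1))) / γ := by
    intro t ht
    obtain ⟨ht1, htT⟩ := mem_Icc.mp ht
    have hF := (hFdiff t).differentiableAt (hUopen.mem_nhds (hUsub (hpmem (t + 1))))
    have := loss_le_of_isMinOn_mirrorObjective hγ (hpmem t) (hpos t ht1) (hpmem (t + 1))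
      (hpos (t + 1) (by omega)) hpstar (hℓ t) (hb0 t) (hb1 t) hF (isMinOn_iff.mpr (hmin t ht1 htT))
    linarith
  have htel : ∑ t ∈ Icc 1 T, (relEntropy pstar (p t) - relEntropy pstar (p (t + 1)))
      = relEntropy pstar (p 1) - relEntropy pstar (p (T + 1)) := by
    rw [← neg_sub, ← sum_Icc_sub hT fun t => relEntropy pstar (p t), ← sum_neg_distrib]
    simp only [neg_sub]
  have hinit : relEntropy pstar (p 1) ≤ Real.log N := by
    have hp1' : p 1 = fun _ => 1 / (Fintype.card (Fin N) : ℝ) := by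
      funext i
      rw [hp1, Fintype.card_fin]
    simpa [hp1'] using relEntropy_uniform_le_log hpstar
  have hlast : 0 ≤ relEntropy pstar (p (T + 1)) :=
    relEntropy_nonneg hpstar.1 (hpos (T + 1) (by omega)) (by rw [hpstar.2, (hpmem _).2])
  have hsum := sum_le_sum hstep
  rw [sum_add_distrib, ← sum_div, htel] at hsum
  have hdecay : (relEntropy pstar (p 1) - relEntropy pstar (p (T + 1))) / γ ≤ Real.log N / γ :=
    div_le_div_of_nonneg_right (by linarith) hγ.le
  linarith

/-- Mirror descent with auxiliary terms: let `γ > 0`, `F_t : Δ_N → ℝ` convex and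
differentiable on a neighborhood of `Δ_N`, and `ℓ_t, b_t ∈ ℝ^N` with `γ|ℓ_t(i)| ≤ 1/16`
and `0 ≤ γ b_t(i) ≤ 1/4`. Let `p_1` be uniform and `p_{t+1}` minimize
`⟨p, ℓ_t + 4γℓ_t² + b_t⟩ + F_t(p) + (1/γ)·KL(p, p_t)` over `Δ_N`, each `p_{t+1}` having
full support. Then for every `p* ∈ Δ_N`,
`Σ_t ⟨p_t, ℓ_t⟩ ≤ (log N)/γ + Σ_t (⟨p*, ℓ_t + 4γℓ_t²⟩ + ⟨p*, b_t⟩ − (1/2)⟨p_t, b_t⟩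
  + F_t(p*) − F_t(p_{t+1}) − Breg_{F_t}(p*, p_{t+1}))`. -/
theorem mirror_descent_with_auxiliary_terms
    (N T : ℕ) (hN : 1 ≤ N) (hT : 1 ≤ T) (γ : ℝ) (hγ : 0 < γ)
    (F : ℕ → (Fin N → ℝ) → ℝ)
    (U : Set (Fin N → ℝ)) (hUopen : IsOpen U) (hUsub : stdSimplex ℝ (Fin N) ⊆ U)
    (hFconv : ∀ t, ConvexOn ℝ (stdSimplex ℝ (Fin N)) (F t))
    (hFdiff : ∀ t, DifferentiableOn ℝ (F t) U)
    (ℓ b : ℕ → Fin N → ℝ)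
    (hℓ : ∀ t i, γ * |ℓ t i| ≤ 1 / 16)
    (hb0 : ∀ t i, 0 ≤ γ * b t i) (hb1 : ∀ t i, γ * b t i ≤ 1 / 4)
    (p : ℕ → Fin N → ℝ)
    (hp1 : ∀ i, p 1 i = 1 / N)
    (hpmem : ∀ t, p t ∈ stdSimplex ℝ (Fin N))
    (hsupp : ∀ t, 2 ≤ t → ∀ i, 0 < p t i)
    (hmin : ∀ t, 1 ≤ t → t ≤ T → ∀ q ∈ stdSimplex ℝ (Fin N),
      (∑ i, p (t + 1) i * (ℓ t i + 4 * γ * (ℓ t i) ^ 2 + b t i)) + F t (p (t + 1))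
          + (1 / γ) * ∑ i, p (t + 1) i * Real.log (p (t + 1) i / p t i)
        ≤ (∑ i, q i * (ℓ t i + 4 * γ * (ℓ t i) ^ 2 + b t i)) + F t q
          + (1 / γ) * ∑ i, q i * Real.log (q i / p t i))
    (pstar : Fin N → ℝ) (hpstar : pstar ∈ stdSimplex ℝ (Fin N)) :
    ∑ t ∈ Icc 1 T, ∑ i, p t i * ℓ t i
      ≤ Real.log N / γ
        + ∑ t ∈ Icc 1 T,
            ((∑ i, pstar i * (ℓ t i + 4 * γ * (ℓ t i) ^ 2))
              + (∑ i, pstar i * b t i) - (1 / 2) * ∑ i, p t i * b t i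
              + F t pstar - F t (p (t + 1))
              - (F t pstar - F t (p (t + 1))
                  - fderiv ℝ (F t) (p (t + 1)) (pstar - p (t + 1)))) :=
  mirror_descent_with_auxiliary_terms_general N T hN hT γ hγ F U hUopen hUsub hFdiff ℓ b hℓ hb0 hb1
    p hp1 hpmem hsupp hmin pstar hpstar
end

section
/- Change of measure via squared Hellinger distance: Let Φ be a finite set, let G > 0, let g : Φ → [0, G], and let ν, ρ ∈ Δ(Φ). Then E_{φ∼ρ}[g(φ)] ≤ 3 · E_{φ∼ν}[g(φ)] + 2G · Σ_{φ∈Φ} (√ν(φ) − √ρ(φ))². -/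
open Finset

/-- Change of measure via squared Hellinger distance: for a finite set `Φ`, `G > 0`,
`g : Φ → [0, G]`, and distributions `ν, ρ ∈ Δ(Φ)`,
`E_{φ∼ρ}[g(φ)] ≤ 3 · E_{φ∼ν}[g(φ)] + 2G · Σ_φ (√ν(φ) − √ρ(φ))²`. -/
theorem expectation_le_three_mul_add_hellinger {Φ : Type*} [Fintype Φ]
    (G : ℝ) (hG : 0 < G) (g : Φ → ℝ) (hg : ∀ φ, g φ ∈ Set.Icc (0 : ℝ) G)
    (ν ρ : Φ → ℝ) (hν : ν ∈ stdSimplex ℝ Φ) (hρ : ρ ∈ stdSimplex ℝ Φ) :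
    ∑ φ, ρ φ * g φ ≤ 3 * ∑ φ, ν φ * g φ
      + 2 * G * ∑ φ, (Real.sqrt (ν φ) - Real.sqrt (ρ φ)) ^ 2 := by
  rw [mul_sum, mul_sum, ← sum_add_distrib]
  refine sum_le_sum fun φ _ => ?_
  obtain ⟨hg0, hgG⟩ := hg φ
  have hν0 : 0 ≤ ν φ := hν.1 φ
  have hρ0 : 0 ≤ ρ φ := hρ.1 φ
  have ha := Real.sq_sqrt hν0
  have hb := Real.sq_sqrt hρ0
  have ha0 := Real.sqrt_nonneg (ν φ)
  have hb0 := Real.sqrt_nonneg (ρ φ)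
  set a := Real.sqrt (ν φ)
  set b := Real.sqrt (ρ φ)
  have key : b ^ 2 ≤ 2 * a ^ 2 + 2 * (a - b) ^ 2 := by nlinarith [sq_nonneg (2 * a - b)]
  have h1 : b ^ 2 * g φ ≤ (2 * a ^ 2 + 2 * (a - b) ^ 2) * g φ :=
    mul_le_mul_of_nonneg_right key hg0
  have h2 : (a - b) ^ 2 * g φ ≤ (a - b) ^ 2 * G :=
    mul_le_mul_of_nonneg_left hgG (sq_nonneg _)
  nlinarith [mul_nonneg hν0 hg0]
end

section
/- Coverability bounds the expected density ratio: Let X and Φ be finite sets, let d : Φ → Δ(X) assign a distribution d_φ to each φ ∈ Φ, let ρ ∈ Δ(Φ), and let μ ∈ Δ(X) have full support. Define d^ρ(x) = Σ_{φ∈Φ} ρ(φ) d_φ(x). Then Σ_{φ∈Φ} ρ(φ) · Σ_{x : d^ρ(x) > 0} d_φ(x)² / d^ρ(x) ≤ max_{φ′∈Φ, x∈X} d_{φ′}(x) / μ(x). -/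
open Finset

/-- Coverability bounds the expected density ratio: for finite sets `X, Φ`, distributions
`d_φ ∈ Δ(X)` for each `φ`, `ρ ∈ Δ(Φ)`, and a full-support `μ ∈ Δ(X)`, with
`d^ρ(x) = Σ_φ ρ(φ) d_φ(x)`, we have
`Σ_φ ρ(φ) · Σ_{x : d^ρ(x) > 0} d_φ(x)² / d^ρ(x) ≤ max_{φ′, x} d_{φ′}(x) / μ(x)`. -/
theorem coverability_bounds_density_ratio {X Φ : Type*}
    [Fintype X] [Nonempty X] [Fintype Φ] [Nonempty Φ]
    (d : Φ → X → ℝ) (hd : ∀ φ, d φ ∈ stdSimplex ℝ X)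
    (ρ : Φ → ℝ) (hρ : ρ ∈ stdSimplex ℝ Φ)
    (μ : X → ℝ) (hμ : μ ∈ stdSimplex ℝ X) (hμpos : ∀ x, 0 < μ x) :
    ∑ φ, ρ φ * ∑ x ∈ univ.filter (fun x => 0 < ∑ φ', ρ φ' * d φ' x),
        (d φ x) ^ 2 / (∑ φ', ρ φ' * d φ' x)
      ≤ ⨆ φ' : Φ, ⨆ x : X, d φ' x / μ x := by
  classical
  set C := ⨆ φ' : Φ, ⨆ x : X, d φ' x / μ x with hCdef
  have hd0 : ∀ φ x, 0 ≤ d φ x := fun φ x => (hd φ).1 x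
  have hρ0 : ∀ φ, 0 ≤ ρ φ := (hρ).1
  have hle : ∀ φ x, d φ x / μ x ≤ C := by
    intro φ x
    have h2 : d φ x / μ x ≤ ⨆ y, d φ y / μ y :=
      le_ciSup (f := fun y => d φ y / μ y) (Set.Finite.bddAbove (Set.finite_range _)) x
    refine h2.trans ?_
    exact le_ciSup (f := fun φ' => ⨆ y, d φ' y / μ y)
      (Set.Finite.bddAbove (Set.finite_range _)) φ
  have hC0 : 0 ≤ C := by
    have x := Classical.arbitrary X
    have φ := Classical.arbitrary Φ
    exact le_trans (div_nonneg (hd0 φ x) (hμpos x).le) (hle φ x)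
  have hCb : ∀ φ x, d φ x ≤ C * μ x := by
    intro φ x
    have := (div_le_iff₀ (hμpos x)).mp (hle φ x)
    linarith
  have hswap : ∑ φ, ρ φ * ∑ x ∈ univ.filter (fun x => 0 < ∑ φ', ρ φ' * d φ' x),
      (d φ x) ^ 2 / (∑ φ', ρ φ' * d φ' x)
      = ∑ x ∈ univ.filter (fun x => 0 < ∑ φ', ρ φ' * d φ' x),
        (∑ φ, ρ φ * (d φ x) ^ 2) / (∑ φ', ρ φ' * d φ' x) := by
    simp_rw [Finset.mul_sum, Finset.sum_div]
    rw [Finset.sum_comm]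
    simp_rw [mul_div_assoc]
  rw [hswap]
  have hbound : ∀ x ∈ univ.filter (fun x => 0 < ∑ φ', ρ φ' * d φ' x),
      (∑ φ, ρ φ * (d φ x) ^ 2) / (∑ φ', ρ φ' * d φ' x) ≤ C * μ x := by
    intro x hx
    have hpos : 0 < ∑ φ', ρ φ' * d φ' x := (Finset.mem_filter.mp hx).2
    rw [div_le_iff₀ hpos]
    have : ∑ φ, ρ φ * (d φ x) ^ 2 ≤ ∑ φ, ρ φ * (C * μ x * d φ x) := by
      apply Finset.sum_le_sum
      intro φ _
      have : (d φ x) ^ 2 ≤ C * μ x * d φ x := by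
        rw [sq]
        exact mul_le_mul_of_nonneg_right (hCb φ x) (hd0 φ x)
      exact mul_le_mul_of_nonneg_left this (hρ0 φ)
    calc ∑ φ, ρ φ * (d φ x) ^ 2 ≤ ∑ φ, ρ φ * (C * μ x * d φ x) := this
      _ = C * μ x * ∑ φ', ρ φ' * d φ' x := by rw [Finset.mul_sum]; congr 1; ext φ; ring
  calc ∑ x ∈ univ.filter (fun x => 0 < ∑ φ', ρ φ' * d φ' x),
        (∑ φ, ρ φ * (d φ x) ^ 2) / (∑ φ', ρ φ' * d φ' x)
      ≤ ∑ x ∈ univ.filter (fun x => 0 < ∑ φ', ρ φ' * d φ' x), C * μ x :=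
        Finset.sum_le_sum hbound
    _ ≤ ∑ x, C * μ x := by
        apply Finset.sum_le_sum_of_subset_of_nonneg (Finset.filter_subset _ _)
        intro x _ _
        exact mul_nonneg hC0 (hμpos x).le
    _ = C := by rw [← Finset.mul_sum, (hμ).2, mul_one]
end

section
/- Minimum of the posterior-information functional in the three-armed bandit construction: Let Δ ∈ (0, 1/16] and s ∈ [0, 1]. For x ∈ [0, 1] define m₁(x) = x·(1/2 − Δ) + (1 − x)·(1/2 + Δ) = 1/2 + Δ(1 − 2x), and define G(x) = (1 − s) · H_b(m₁(x)) + KL((x, 1−x), (1/2, 1/2)) + s · H_b(x), where KL((x,1−x),(1/2,1/2)) = x·log(2x) + (1−x)·log(2(1−x)). Then: (i) G(x) ≥ log 2 for every x ∈ [0, 1]; (ii) G(1/2) = log 2; and (iii) if s < 1, then x = 1/2 is the unique minimizer of G on [0, 1]. -/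
/-- The binary entropy function with natural logarithm, with the convention `0 · log 0 = 0`
(automatic in Lean since `Real.log 0 = 0`). -/
noncomputable def binaryEntropy (p : ℝ) : ℝ :=
  -(p * Real.log p) - (1 - p) * Real.log (1 - p)

/-- The mean `m₁(x) = x·(1/2 − Δ) + (1 − x)·(1/2 + Δ) = 1/2 + Δ(1 − 2x)`. -/
noncomputable def mOne (Δ x : ℝ) : ℝ := 1 / 2 + Δ * (1 - 2 * x)

/-- The posterior-information functional
`G(x) = (1 − s)·H_b(m₁(x)) + KL((x, 1−x), (1/2, 1/2)) + s·H_b(x)`,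
where `KL((x,1−x),(1/2,1/2)) = x·log(2x) + (1−x)·log(2(1−x))`. -/
noncomputable def infoG (Δ s x : ℝ) : ℝ :=
  (1 - s) * binaryEntropy (mOne Δ x)
    + (x * Real.log (2 * x) + (1 - x) * Real.log (2 * (1 - x)))
    + s * binaryEntropy x

lemma binaryEntropy_eq (p : ℝ) : binaryEntropy p = Real.binEntropy p := by
  simp [binaryEntropy, Real.binEntropy, Real.log_inv]
  ring

lemma kl_eq (x : ℝ) (hx : x ∈ Set.Icc (0 : ℝ) 1) :
    x * Real.log (2 * x) + (1 - x) * Real.log (2 * (1 - x))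
      = Real.log 2 - binaryEntropy x := by
  rcases eq_or_lt_of_le hx.1 with h0 | h0
  · simp [← h0, binaryEntropy]
  rcases eq_or_lt_of_le hx.2 with h1 | h1
  · simp [h1, binaryEntropy]
  rw [Real.log_mul two_ne_zero h0.ne', Real.log_mul two_ne_zero (by linarith)]
  unfold binaryEntropy; ring

lemma entropy_le (Δ x : ℝ) (hΔ : Δ ∈ Set.Ioc (0 : ℝ) (1 / 16))
    (hx : x ∈ Set.Icc (0 : ℝ) 1) :
    binaryEntropy x ≤ binaryEntropy (mOne Δ x) ∧
      (x ≠ 1 / 2 → binaryEntropy x < binaryEntropy (mOne Δ x)) := by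
  set t : ℝ := |x - 1 / 2| with ht
  have ht0 : 0 ≤ t := abs_nonneg _
  have ht2 : t ≤ 1 / 2 := by
    rw [ht, abs_le]; constructor <;> [linarith [hx.1]; linarith [hx.2]]
  have hHx : binaryEntropy x = Real.binEntropy (1 / 2 - t) := by
    rcases le_or_gt x (1 / 2) with h | h
    · rw [ht, abs_of_nonpos (by linarith), binaryEntropy_eq]; ring_nf
    · rw [ht, abs_of_pos (by linarith), binaryEntropy_eq,
        show (1 : ℝ) / 2 - (x - 1 / 2) = 1 - x by ring, Real.binEntropy_one_sub]
  have hHm : binaryEntropy (mOne Δ x) = Real.binEntropy (1 / 2 - 2 * Δ * t) := by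
    rcases le_or_gt x (1 / 2) with h | h
    · rw [ht, abs_of_nonpos (by linarith), binaryEntropy_eq,
        show (1 : ℝ) / 2 - 2 * Δ * -(x - 1 / 2) = 1 - mOne Δ x by unfold mOne; ring,
        Real.binEntropy_one_sub]
    · rw [ht, abs_of_pos (by linarith), binaryEntropy_eq]
      congr 1; unfold mOne; ring
  have hmem1 : (1 / 2 - t : ℝ) ∈ Set.Icc (0 : ℝ) 2⁻¹ := by
    exact ⟨by linarith, by norm_num; linarith⟩
  have hmem2 : (1 / 2 - 2 * Δ * t : ℝ) ∈ Set.Icc (0 : ℝ) 2⁻¹ := by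
    have : 2 * Δ * t ≤ t := by nlinarith [hΔ.1.le, hΔ.2]
    exact ⟨by linarith, by norm_num; nlinarith [hΔ.1.le]⟩
  constructor
  · rw [hHx, hHm]
    apply Real.binEntropy_strictMonoOn.monotoneOn hmem1 hmem2
    nlinarith [hΔ.1.le, hΔ.2]
  · intro hne
    have htpos : 0 < t := by
      rw [ht]; exact abs_pos.mpr (sub_ne_zero.mpr hne)
    rw [hHx, hHm]
    apply Real.binEntropy_strictMonoOn hmem1 hmem2
    nlinarith [hΔ.1, hΔ.2]

lemma infoG_eq (Δ s x : ℝ) (hx : x ∈ Set.Icc (0 : ℝ) 1) :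
    infoG Δ s x = Real.log 2
      + (1 - s) * (binaryEntropy (mOne Δ x) - binaryEntropy x) := by
  unfold infoG
  rw [kl_eq x hx]; ring

/-- Minimum of the posterior-information functional in the three-armed bandit construction:
for `Δ ∈ (0, 1/16]` and `s ∈ [0, 1]`, (i) `G(x) ≥ log 2` on `[0,1]`; (ii) `G(1/2) = log 2`;
(iii) if `s < 1` then `x = 1/2` is the unique minimizer of `G` on `[0,1]`. -/
theorem infoG_min (Δ s : ℝ) (hΔ : Δ ∈ Set.Ioc (0 : ℝ) (1 / 16))
    (hs : s ∈ Set.Icc (0 : ℝ) 1) :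
    (∀ x ∈ Set.Icc (0 : ℝ) 1, Real.log 2 ≤ infoG Δ s x) ∧
    infoG Δ s (1 / 2) = Real.log 2 ∧
    (s < 1 → ∀ x ∈ Set.Icc (0 : ℝ) 1, x ≠ 1 / 2 → infoG Δ s (1 / 2) < infoG Δ s x) := by
  have hhalf : (1 / 2 : ℝ) ∈ Set.Icc (0 : ℝ) 1 := by norm_num
  have h2 : infoG Δ s (1 / 2) = Real.log 2 := by
    rw [infoG_eq Δ s _ hhalf, show mOne Δ (1 / 2) = 1 / 2 by unfold mOne; ring]
    ring
  refine ⟨fun x hx => ?_, h2, fun hs1 x hx hne => ?_⟩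
  · rw [infoG_eq Δ s x hx]
    nlinarith [(entropy_le Δ x hΔ hx).1, hs.2]
  · rw [h2, infoG_eq Δ s x hx]
    nlinarith [(entropy_le Δ x hΔ hx).2 hne]
end

section
/- Regret decomposition for the general minimax framework: Let Π, Ψ, Φ be finite nonempty sets, let u : Ψ → ℝ and w : Ψ × Π → ℝ be functions, let η > 0, and for each π ∈ Π and ρ ∈ Δ(Φ) let D^π(· ∥ ρ) : Δ(Ψ) → ℝ be convex, continuous, and differentiable on a neighborhood of Δ(Ψ). Define AIR_η(p, ν; ρ) = E_{π∼p} E_{ψ∼ν}[ u(ψ) − w(ψ, π) ] − (1/η) · E_{π∼p}[ D^π(ν ∥ ρ) ] for p ∈ Δ(Π), ν ∈ Δ(Ψ). Fix T ≥ 1, and for each t ∈ {1,…,T} let ρ_t ∈ Δ(Φ), let p_t ∈ Δ(Π) be a minimizer of p ↦ max_{ν∈Δ(Ψ)} AIR_η(p, ν; ρ_t), let ν_t ∈ Δ(Ψ) be a maximizer of ν ↦ AIR_η(p_t, ν; ρ_t), and let ψ_t ∈ Ψ with Dirac distribution δ_{ψ_t} ∈ Δ(Ψ). Then Σ_{t=1}^T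 ( u(ψ_t) − E_{π∼p_t}[ w(ψ_t, π) ] ) ≤ Σ_{t=1}^T min_{p∈Δ(Π)} max_{ν∈Δ(Ψ)} AIR_η(p, ν; ρ_t) + (1/η) · Σ_{t=1}^T E_{π∼p_t}[ D^π(δ_{ψ_t} ∥ ρ_t) − Breg_{D^π(·∥ρ_t)}(δ_{ψ_t}, ν_t) ]. -/
open Finset

/-- The Algorithmic-Information-Ratio objective
`AIR_η(p, ν; ρ) = E_{π∼p} E_{ψ∼ν}[u(ψ) − w(ψ, π)] − (1/η)·E_{π∼p}[D^π(ν ∥ ρ)]`. -/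
noncomputable def AIR {Pol Psi Phi : Type*} [Fintype Pol] [Fintype Psi]
    (u : Psi → ℝ) (w : Psi → Pol → ℝ) (η : ℝ)
    (D : Pol → (Phi → ℝ) → (Psi → ℝ) → ℝ) (ρ : Phi → ℝ)
    (p : Pol → ℝ) (ν : Psi → ℝ) : ℝ :=
  (∑ π, p π * ∑ ψ, ν ψ * (u ψ - w ψ π)) - (1 / η) * ∑ π, p π * D π ρ ν

/-- The Dirac distribution `δ_{ψ₀} ∈ Δ(Ψ)`. -/
noncomputable def diracDist {Psi : Type*} [DecidableEq Psi] (ψ0 : Psi) : Psi → ℝ :=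
  fun ψ => if ψ = ψ0 then 1 else 0

/-!
Fix a round and write `δ` for the Dirac mass at `ψ_t`. Since `∑ π, p_t π = 1`, the regret
`u(ψ_t) − E_{p_t} w(ψ_t, ·)` equals `AIR(p_t, δ) + (1/η) E_{p_t} D(δ)`. Expand `AIR(p_t, ·)`
around `ν_t`: the gain term is linear in `ν`, so the Bregman remainder of `AIR(p_t, ·)` is
`−(1/η)` times the `p_t`-average of the Bregman divergences of the `D^π`, while the first-order
term in the feasible direction `δ − ν_t` is nonpositive because `ν_t` maximises `AIR(p_t, ·)`
over the simplex. Finally `AIR(p_t, ν_t) = max_ν AIR(p_t, ν) = min_p max_ν AIR(p, ν)` by the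
choice of `p_t`, and the rounds are summed.
-/

section Bregman

variable {E : Type*} [NormedAddCommGroup E] [NormedSpace ℝ E]

noncomputable def bregman (f : E → ℝ) (x y : E) : ℝ :=
  f x - f y - fderiv ℝ f y (x - y)

theorem bregman_continuousLinearMap (L : StrongDual ℝ E) (x y : E) : bregman L x y = 0 := by
  simp [bregman, L.fderiv]

variable {f g : E → ℝ} {x y : E}

theorem bregman_sub (hf : DifferentiableAt ℝ f y) (hg : DifferentiableAt ℝ g y) :
    bregman (fun z => f z - g z) x y = bregman f x y - bregman g x y := by
  simp only [bregman, fderiv_fun_sub hf hg, sub_apply]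
  ring

theorem bregman_const_mul (hf : DifferentiableAt ℝ f y) (c : ℝ) :
    bregman (fun z => c * f z) x y = c * bregman f x y := by
  simp only [bregman, fderiv_const_mul hf, smul_apply, smul_eq_mul]
  ring

theorem bregman_fun_sum {ι : Type*} {s : Finset ι} {A : ι → E → ℝ}
    (hA : ∀ i ∈ s, DifferentiableAt ℝ (A i) y) :
    bregman (fun z => ∑ i ∈ s, A i z) x y = ∑ i ∈ s, bregman (A i) x y := by
  simp only [bregman, fderiv_fun_sum hA, _root_.sum_apply, Finset.sum_sub_distrib]

end Bregman

theorem IsMaxOn.fderiv_sub_nonpos {E : Type*} [NormedAddCommGroup E] [NormedSpace ℝ E]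
    {f : E → ℝ} {s : Set E} {x y : E} (hf : IsMaxOn f s x) (hs : Convex ℝ s)
    (hx : x ∈ s) (hy : y ∈ s) (hfx : DifferentiableAt ℝ f x) :
    fderiv ℝ f x (y - x) ≤ 0 :=
  hf.localize.hasFDerivWithinAt_nonpos hfx.hasFDerivAt.hasFDerivWithinAt
    (sub_mem_posTangentConeAt_of_segment_subset (hs.segment_subset hx hy))

theorem le_iInf_iSup_of_isSaddle {ι κ : Type*} {f : ι → κ → ℝ} {i₀ : ι} {j₀ : κ}
    (hmax : ∀ j, f i₀ j ≤ f i₀ j₀) (hmin : ∀ i, ⨆ j, f i₀ j ≤ ⨆ j, f i j) :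
    f i₀ j₀ ≤ ⨅ i, ⨆ j, f i j :=
  have : Nonempty ι := ⟨i₀⟩
  le_ciInf fun i => (le_ciSup ⟨f i₀ j₀, Set.forall_mem_range.2 hmax⟩ j₀).trans (hmin i)

theorem diracDist_mem_stdSimplex {Psi : Type*} [Fintype Psi] [DecidableEq Psi] (ψ₀ : Psi) :
    diracDist ψ₀ ∈ stdSimplex ℝ Psi :=
  ⟨fun ψ => by unfold diracDist; split_ifs <;> norm_num, by simp [diracDist]⟩

section AIR

variable {Pol Psi Phi : Type*} [Fintype Pol] [Fintype Psi]
  (u : Psi → ℝ) (w : Psi → Pol → ℝ) (η : ℝ) (D : Pol → (Phi → ℝ) → (Psi → ℝ) → ℝ)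
  (ρ : Phi → ℝ) {p : Pol → ℝ}

theorem AIR_diracDist [DecidableEq Psi] (hp : ∑ π, p π = 1) (ψ₀ : Psi) :
    AIR u w η D ρ p (diracDist ψ₀)
      = u ψ₀ - ∑ π, p π * w ψ₀ π - (1 / η) * ∑ π, p π * D π ρ (diracDist ψ₀) := by
  simp [AIR, diracDist, mul_sub, Finset.sum_sub_distrib, ← Finset.sum_mul, hp]

variable {ν : Psi → ℝ} (hD : ∀ π, DifferentiableAt ℝ (D π ρ) ν)
include hD

theorem differentiableAt_AIR : DifferentiableAt ℝ (AIR u w η D ρ p) ν := by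
  unfold AIR
  fun_prop

theorem bregman_AIR (x : Psi → ℝ) :
    bregman (AIR u w η D ρ p) x ν = -(1 / η) * ∑ π, p π * bregman (D π ρ) x ν := by
  let L : StrongDual ℝ (Psi → ℝ) :=
    ∑ π, p π • ∑ ψ, (u ψ - w ψ π) • ContinuousLinearMap.proj ψ
  have hL : (fun ν => ∑ π, p π * ∑ ψ, ν ψ * (u ψ - w ψ π)) = ⇑L := by
    funext ν
    simp [L, mul_comm]
  have hDν : ∀ π, DifferentiableAt ℝ (fun z => p π * D π ρ z) ν := fun π => (hD π).const_mul _
  change bregman (fun ν => (∑ π, p π * ∑ ψ, ν ψ * (u ψ - w ψ π))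
    - (1 / η) * ∑ π, p π * D π ρ ν) x ν = _
  rw [bregman_sub (by fun_prop) (by fun_prop), hL, bregman_continuousLinearMap,
    bregman_const_mul (by fun_prop), bregman_fun_sum fun π _ => hDν π]
  simp only [bregman_const_mul (hD _)]
  ring

theorem regret_le_AIR_add_sub_bregman [DecidableEq Psi] (hp : ∑ π, p π = 1)
    (hν : ν ∈ stdSimplex ℝ Psi) (hνmax : IsMaxOn (AIR u w η D ρ p) (stdSimplex ℝ Psi) ν)
    (ψ₀ : Psi) :
    u ψ₀ - ∑ π, p π * w ψ₀ π ≤ AIR u w η D ρ p ν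
      + (1 / η) * ∑ π, p π * (D π ρ (diracDist ψ₀) - bregman (D π ρ) (diracDist ψ₀) ν) := by
  have hfirst := hνmax.fderiv_sub_nonpos (convex_stdSimplex ℝ Psi) hν
    (diracDist_mem_stdSimplex ψ₀) (differentiableAt_AIR u w η D ρ hD)
  have hbreg := bregman_AIR u w η D ρ hD (diracDist ψ₀) (p := p)
  have hdirac := AIR_diracDist u w η D ρ hp ψ₀
  simp only [mul_sub, Finset.sum_sub_distrib]
  rw [bregman] at hbreg
  linear_combination hfirst + hbreg - hdirac

end AIR

theorem regret_decomposition_general_framework_general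
    {Pol Psi Phi : Type*} [Fintype Pol]
    [Fintype Psi] [DecidableEq Psi] [Fintype Phi]
    (u : Psi → ℝ) (w : Psi → Pol → ℝ) (η : ℝ)
    (D : Pol → (Phi → ℝ) → (Psi → ℝ) → ℝ)
    (hdiff : ∀ π, ∀ ρ ∈ stdSimplex ℝ Phi, ∃ U : Set (Psi → ℝ),
      IsOpen U ∧ stdSimplex ℝ Psi ⊆ U ∧ DifferentiableOn ℝ (D π ρ) U)
    (T : ℕ)
    (ρ : ℕ → Phi → ℝ) (hρ : ∀ t, ρ t ∈ stdSimplex ℝ Phi)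
    (p : ℕ → Pol → ℝ) (hp : ∀ t, p t ∈ stdSimplex ℝ Pol)
    (hpmin : ∀ t, 1 ≤ t → t ≤ T → ∀ p' ∈ stdSimplex ℝ Pol,
      (⨆ ν' : stdSimplex ℝ Psi, AIR u w η D (ρ t) (p t) ν')
        ≤ ⨆ ν' : stdSimplex ℝ Psi, AIR u w η D (ρ t) p' ν')
    (ν : ℕ → Psi → ℝ) (hν : ∀ t, ν t ∈ stdSimplex ℝ Psi)
    (hνmax : ∀ t, 1 ≤ t → t ≤ T → ∀ ν' ∈ stdSimplex ℝ Psi,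
      AIR u w η D (ρ t) (p t) ν' ≤ AIR u w η D (ρ t) (p t) (ν t))
    (ψ : ℕ → Psi) :
    ∑ t ∈ Icc 1 T, (u (ψ t) - ∑ π, p t π * w (ψ t) π)
      ≤ (∑ t ∈ Icc 1 T, ⨅ p' : stdSimplex ℝ Pol, ⨆ ν' : stdSimplex ℝ Psi,
            AIR u w η D (ρ t) p' ν')
        + (1 / η) * ∑ t ∈ Icc 1 T, ∑ π, p t π *
            (D π (ρ t) (diracDist (ψ t))
              - (D π (ρ t) (diracDist (ψ t)) - D π (ρ t) (ν t)
                  - fderiv ℝ (D π (ρ t)) (ν t) (diracDist (ψ t) - ν t))) := by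
  rw [Finset.mul_sum, ← Finset.sum_add_distrib]
  refine Finset.sum_le_sum fun t ht => ?_
  obtain ⟨ht1, htT⟩ := Finset.mem_Icc.1 ht
  have hD : ∀ π, DifferentiableAt ℝ (D π (ρ t)) (ν t) := fun π => by
    obtain ⟨U, hUopen, hsub, hdiffU⟩ := hdiff π (ρ t) (hρ t)
    exact hdiffU.differentiableAt (hUopen.mem_nhds (hsub (hν t)))
  have hminimax : AIR u w η D (ρ t) (p t) (ν t)
      ≤ ⨅ p' : stdSimplex ℝ Pol, ⨆ ν' : stdSimplex ℝ Psi, AIR u w η D (ρ t) p' ν' :=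
    le_iInf_iSup_of_isSaddle (f := fun (p' : stdSimplex ℝ Pol) (ν' : stdSimplex ℝ Psi) => AIR u w η D (ρ t) p' ν') (i₀ := ⟨p t, hp t⟩)
      (j₀ := ⟨ν t, hν t⟩) (fun ν' => hνmax t ht1 htT ν' ν'.2)
      (fun p' => hpmin t ht1 htT p' p'.2)
  exact (regret_le_AIR_add_sub_bregman u w η D (ρ t) hD (hp t).2 (hν t)
    (fun ν' hν' => hνmax t ht1 htT ν' hν') (ψ t)).trans (add_le_add_left hminimax _)

/-- Regret decomposition for the general minimax framework: if in each round `t` the learner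
plays the minimax distribution `p_t` of `AIR_η(·, ·; ρ_t)` and `ν_t` is the corresponding
best response, then for any comparator sequence `ψ_t`,
`Σ_t (u(ψ_t) − E_{π∼p_t}[w(ψ_t, π)]) ≤ Σ_t min_p max_ν AIR_η(p, ν; ρ_t)
  + (1/η) Σ_t E_{π∼p_t}[D^π(δ_{ψ_t} ∥ ρ_t) − Breg_{D^π(·∥ρ_t)}(δ_{ψ_t}, ν_t)]`. -/
theorem regret_decomposition_general_framework
    {Pol Psi Phi : Type*} [Fintype Pol] [Nonempty Pol]
    [Fintype Psi] [Nonempty Psi] [DecidableEq Psi] [Fintype Phi] [Nonempty Phi]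
    (u : Psi → ℝ) (w : Psi → Pol → ℝ) (η : ℝ) (hη : 0 < η)
    (D : Pol → (Phi → ℝ) → (Psi → ℝ) → ℝ)
    (hconv : ∀ π, ∀ ρ ∈ stdSimplex ℝ Phi, ConvexOn ℝ (stdSimplex ℝ Psi) (D π ρ))
    (hcont : ∀ π, ∀ ρ ∈ stdSimplex ℝ Phi, ContinuousOn (D π ρ) (stdSimplex ℝ Psi))
    (hdiff : ∀ π, ∀ ρ ∈ stdSimplex ℝ Phi, ∃ U : Set (Psi → ℝ),
      IsOpen U ∧ stdSimplex ℝ Psi ⊆ U ∧ DifferentiableOn ℝ (D π ρ) U)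
    (T : ℕ) (hT : 1 ≤ T)
    (ρ : ℕ → Phi → ℝ) (hρ : ∀ t, ρ t ∈ stdSimplex ℝ Phi)
    (p : ℕ → Pol → ℝ) (hp : ∀ t, p t ∈ stdSimplex ℝ Pol)
    (hpmin : ∀ t, 1 ≤ t → t ≤ T → ∀ p' ∈ stdSimplex ℝ Pol,
      (⨆ ν' : stdSimplex ℝ Psi, AIR u w η D (ρ t) (p t) ν')
        ≤ ⨆ ν' : stdSimplex ℝ Psi, AIR u w η D (ρ t) p' ν')
    (ν : ℕ → Psi → ℝ) (hν : ∀ t, ν t ∈ stdSimplex ℝ Psi)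
    (hνmax : ∀ t, 1 ≤ t → t ≤ T → ∀ ν' ∈ stdSimplex ℝ Psi,
      AIR u w η D (ρ t) (p t) ν' ≤ AIR u w η D (ρ t) (p t) (ν t))
    (ψ : ℕ → Psi) :
    ∑ t ∈ Icc 1 T, (u (ψ t) - ∑ π, p t π * w (ψ t) π)
      ≤ (∑ t ∈ Icc 1 T, ⨅ p' : stdSimplex ℝ Pol, ⨆ ν' : stdSimplex ℝ Psi,
            AIR u w η D (ρ t) p' ν')
        + (1 / η) * ∑ t ∈ Icc 1 T, ∑ π, p t π *
            (D π (ρ t) (diracDist (ψ t))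
              - (D π (ρ t) (diracDist (ψ t)) - D π (ρ t) (ν t)
                  - fderiv ℝ (D π (ρ t)) (ν t) (diracDist (ψ t) - ν t))) :=
  regret_decomposition_general_framework_general u w η D hdiff T ρ hρ p hp hpmin ν hν hνmax ψ
end
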